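/- Let N ≥ 2 and let ν_1,…,ν_N ∈ ℂ be pairwise distinct. Then for each j = 1,…,N and all λ_3,…,λ_N ∈ ℂ, the partition function vanishes when two of its arguments equal ν_j and ν_j − 1: Z_N(ν_j, ν_j − 1, λ_3,…,λ_N) = 0. -/

import Mathlib

open scoped BigOperators
noncomputable section

namespace SixVertex

/-- A spin configuration of the `N`-site quantum chain: one spin (`0` = up, `1` = down)
at each site. Site `k` of the paper (k = 1,…,N) corresponds to index `k-1 : Fin N`. -/
abbrev Cfg (N : ℕ) := Fin N → Fin 2

/-- Operators on the quantum space `H = (ℂ²)^{⊗N}`, represented as matrices in the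
standard (spin-configuration) basis. -/
abbrev Op (N : ℕ) := Matrix (Cfg N) (Cfg N) ℂ

/-- The operator acting as the 2×2 matrix `M` in the `k`-th tensor factor and as the
identity elsewhere. -/
def siteOp {N : ℕ} (k : Fin N) (M : Matrix (Fin 2) (Fin 2) ℂ) : Op N :=
  Matrix.of fun s s' => if ∀ i, i ≠ k → s i = s' i then M (s k) (s' k) else 0

def piPlus : Matrix (Fin 2) (Fin 2) ℂ := !![1, 0; 0, 0]
def piMinus : Matrix (Fin 2) (Fin 2) ℂ := !![0, 0; 0, 1]
def sigmaPlus : Matrix (Fin 2) (Fin 2) ℂ := !![0, 1; 0, 0]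
def sigmaMinus : Matrix (Fin 2) (Fin 2) ℂ := !![0, 0; 1, 0]

/-- Rational weight `a(λ,ν) = λ - ν + 1`. -/
def aW (l v : ℂ) : ℂ := l - v + 1
/-- Rational weight `b(λ,ν) = λ - ν`. -/
def bW (l v : ℂ) : ℂ := l - v

/-- The L-operator at site `k` (a 2×2 matrix in the auxiliary space, with entries
operators on the quantum space); the weight `c` equals `1`. -/
def Lop {N : ℕ} (ν : Fin N → ℂ) (k : Fin N) (l : ℂ) :
    Matrix (Fin 2) (Fin 2) (Op N) :=
  !![aW l (ν k) • siteOp k piPlus + bW l (ν k) • siteOp k piMinus,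
       siteOp k sigmaMinus;
     siteOp k sigmaPlus,
       bW l (ν k) • siteOp k piPlus + aW l (ν k) • siteOp k piMinus]

/-- The monodromy matrix `T(λ) = L_N(λ,ν_N) ⋯ L_1(λ,ν_1)`. -/
def monodromy {N : ℕ} (ν : Fin N → ℂ) (l : ℂ) :
    Matrix (Fin 2) (Fin 2) (Op N) :=
  (((List.finRange N).reverse).map fun k => Lop ν k l).prod

/-- The operator `A(λ)`. -/
def Aop {N : ℕ} (ν : Fin N → ℂ) (l : ℂ) : Op N := monodromy ν l 0 0
/-- The operator `B(λ)`. -/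
def Bop {N : ℕ} (ν : Fin N → ℂ) (l : ℂ) : Op N := monodromy ν l 0 1
/-- The operator `C(λ)`. -/
def Cop {N : ℕ} (ν : Fin N → ℂ) (l : ℂ) : Op N := monodromy ν l 1 0
/-- The operator `D(λ)`. -/
def Dop {N : ℕ} (ν : Fin N → ℂ) (l : ℂ) : Op N := monodromy ν l 1 1

/-- The all-spins-up configuration. -/
def upCfg (N : ℕ) : Cfg N := fun _ => 0
/-- The all-spins-down configuration. -/
def downCfg (N : ℕ) : Cfg N := fun _ => 1

/-- The basis vector of `H` corresponding to a spin configuration `s`. -/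
def basisVec {N : ℕ} (s : Cfg N) : Cfg N → ℂ := Pi.single s 1

/-- The all-spins-up vacuum vector `|⇑⟩`. -/
def upVec (N : ℕ) : Cfg N → ℂ := basisVec (upCfg N)
/-- The all-spins-down vector `|⇓⟩`. -/
def downVec (N : ℕ) : Cfg N → ℂ := basisVec (downCfg N)

/-- The partition function of the six-vertex model with domain wall boundary conditions:
`Z_N(λ_1,…,λ_N) = ⟨⇓| B(λ_N) ⋯ B(λ_1) |⇑⟩`. -/
def Zfun (N : ℕ) (ν : Fin N → ℂ) (lam : Fin N → ℂ) : ℂ :=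
  (((List.finRange N).reverse).map fun j => Bop ν (lam j)).prod (downCfg N) (upCfg N)

end SixVertex
end

/-!
Write `B(λ-1) B(λ) |⇑⟩` as the entry `(0,1) ⊗ (0,1)` of `T₁(λ-1) T₂(λ)`, with two separate auxiliary
spaces `1, 2`, applied to `|⇑⟩`, and build it up one site at a time. Since `R₁₂(-1) = P₁₂ - 1` is
proportional to the antisymmetrizer, the RLL relation makes each local factor `L₁(x-1) L₂(x)` map
tensors symmetric in the two auxiliary indices to symmetric ones; the empty chain is symmetric, hence
so is every partial product. At `λ = ν_j` the factor of site `j` (space `3`) is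
`L₁₃(-1) L₂₃(0) = (P₁₃ - 1) P₂₃ = P₂₃ (P₁₂ - 1)`, which annihilates symmetric tensors. So
`B(ν_j - 1) B(ν_j) |⇑⟩ = 0`, and `Z_N` is a matrix element of a product ending in this pair.
-/
namespace Matrix

variable {ι κ R : Type*}

theorem scalar_commute_iff_forall_commute {n α : Type*} [Semiring α] [DecidableEq n] [Fintype n]
    {r : α} {M : Matrix n n α} : Commute (scalar n r) M ↔ ∀ i j, Commute r (M i j) := by
  rw [scalar_commute_iff, ← Matrix.ext_iff]
  simp [Commute, SemiconjBy]

theorem sum_sum_mulVec_eq_zero_of_antisymm {m n : Type*} [Fintype ι] [Fintype n] [Ring R]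
    [IsAddTorsionFree R] (G : ι → ι → Matrix m n R) (W : ι → ι → n → R)
    (hG : ∀ c d, G c d + G d c = 0) (hW : ∀ c d, W c d = W d c) :
    ∑ c, ∑ d, G c d *ᵥ W c d = 0 := by
  refine self_eq_neg.1 ?_
  calc ∑ c, ∑ d, G c d *ᵥ W c d = ∑ c, ∑ d, G d c *ᵥ W d c := Finset.sum_comm
    _ = ∑ c, ∑ d, -(G c d *ᵥ W c d) :=
      Finset.sum_congr rfl fun c _ => Finset.sum_congr rfl fun d _ => by
        rw [eq_neg_of_add_eq_zero_left (hG d c), neg_mulVec, hW]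
    _ = -∑ c, ∑ d, G c d *ᵥ W c d := by simp only [Finset.sum_neg_distrib]

def piKronecker [Fintype ι] [CommSemiring R] (M : ι → Matrix κ κ R) :
    Matrix (ι → κ) (ι → κ) R :=
  of fun s s' => ∏ i, M i (s i) (s' i)

theorem piKronecker_mul [Fintype ι] [DecidableEq ι] [Fintype κ] [CommSemiring R]
    (M M' : ι → Matrix κ κ R) : piKronecker M * piKronecker M' = piKronecker (M * M') := by
  ext s s'
  simp only [piKronecker, mul_apply, of_apply, Pi.mul_apply, Fintype.prod_sum,
    Finset.prod_mul_distrib]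

theorem _root_.Commute.piKronecker [Fintype ι] [DecidableEq ι] [Fintype κ] [CommSemiring R]
    {M M' : ι → Matrix κ κ R} (h : Commute M M') : Commute (piKronecker M) (piKronecker M') := by
  rw [Commute, SemiconjBy, piKronecker_mul, piKronecker_mul, h.eq]

end Matrix

namespace SixVertex

open Matrix

variable {N : ℕ}

theorem siteOp_eq_piKronecker (k : Fin N) (A : Matrix (Fin 2) (Fin 2) ℂ) :
    siteOp k A = piKronecker (Pi.mulSingle k A) := by
  ext s s'
  have off_site : ∀ i ∈ ({k}ᶜ : Finset (Fin N)),
      (Pi.mulSingle k A : Fin N → Matrix (Fin 2) (Fin 2) ℂ) i (s i) (s' i) =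
      if s i = s' i then 1 else 0 := fun i hi => by
    rw [Pi.mulSingle_eq_of_ne (by simpa using hi), one_apply]
  rw [piKronecker, of_apply, Fintype.prod_eq_mul_prod_compl k, Finset.prod_congr rfl off_site,
    Finset.prod_boole, Pi.mulSingle_eq_same, siteOp, of_apply]
  simp [mul_ite]

theorem siteOp_mul (k : Fin N) (A B : Matrix (Fin 2) (Fin 2) ℂ) :
    siteOp k A * siteOp k B = siteOp k (A * B) := by
  rw [siteOp_eq_piKronecker, siteOp_eq_piKronecker, siteOp_eq_piKronecker, piKronecker_mul,
    Pi.mulSingle_mul]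

theorem commute_siteOp {k k' : Fin N} (h : k ≠ k') (A B : Matrix (Fin 2) (Fin 2) ℂ) :
    Commute (siteOp k A) (siteOp k' B) := by
  rw [siteOp_eq_piKronecker, siteOp_eq_piKronecker]
  exact (Pi.mulSingle_commute (f := fun _ => Matrix (Fin 2) (Fin 2) ℂ) h A B).piKronecker

theorem siteOp_add (k : Fin N) (A B : Matrix (Fin 2) (Fin 2) ℂ) :
    siteOp k (A + B) = siteOp k A + siteOp k B := by
  ext s s'
  simp only [siteOp, of_apply, Matrix.add_apply]
  split_ifs <;> simp

theorem siteOp_sub (k : Fin N) (A B : Matrix (Fin 2) (Fin 2) ℂ) :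
    siteOp k (A - B) = siteOp k A - siteOp k B := by
  ext s s'
  simp only [siteOp, of_apply, Matrix.sub_apply]
  split_ifs <;> simp

theorem siteOp_smul (k : Fin N) (x : ℂ) (A : Matrix (Fin 2) (Fin 2) ℂ) :
    siteOp k (x • A) = x • siteOp k A := by
  ext s s'
  simp only [siteOp, of_apply, Matrix.smul_apply]
  split_ifs <;> simp

theorem siteOp_zero (k : Fin N) : siteOp k (0 : Matrix (Fin 2) (Fin 2) ℂ) = 0 := by
  simpa using siteOp_smul k 0 0

def localL (x : ℂ) : Matrix (Fin 2) (Fin 2) (Matrix (Fin 2) (Fin 2) ℂ) :=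
  !![(x + 1) • piPlus + x • piMinus, sigmaMinus; sigmaPlus, x • piPlus + (x + 1) • piMinus]

theorem Lop_apply (ν : Fin N → ℂ) (k : Fin N) (l : ℂ) (a b : Fin 2) :
    Lop ν k l a b = siteOp k (localL (l - ν k) a b) := by
  fin_cases a <;> fin_cases b <;> simp [Lop, localL, aW, bW, siteOp_add, siteOp_smul]

theorem localL_mul_symm (x : ℂ) (a b c d : Fin 2) :
    localL (x - 1) a c * localL x b d + localL (x - 1) a d * localL x b c =
      localL (x - 1) b c * localL x a d + localL (x - 1) b d * localL x a c := by
  ext i i'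
  fin_cases a <;> fin_cases b <;> fin_cases c <;> fin_cases d <;> fin_cases i <;> fin_cases i' <;>
    simp [localL, piPlus, piMinus, sigmaPlus, sigmaMinus] <;> ring

theorem localL_neg_one_mul_antisymm (a b c d : Fin 2) :
    localL (-1) a c * localL 0 b d + localL (-1) a d * localL 0 b c = 0 := by
  ext i i'
  fin_cases a <;> fin_cases b <;> fin_cases c <;> fin_cases d <;> fin_cases i <;> fin_cases i' <;>
    simp [localL, piPlus, piMinus, sigmaPlus, sigmaMinus]

/-- The ordered product of the L-operators of the sites in `r`, leftmost first;
`monodromy ν l = chainMonodromy ν l (List.finRange N).reverse`. -/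
def chainMonodromy (ν : Fin N → ℂ) (l : ℂ) (r : List (Fin N)) : Matrix (Fin 2) (Fin 2) (Op N) :=
  (r.map fun k => Lop ν k l).prod

theorem chainMonodromy_cons (ν : Fin N → ℂ) (l : ℂ) (k : Fin N) (r : List (Fin N)) :
    chainMonodromy ν l (k :: r) = Lop ν k l * chainMonodromy ν l r :=
  List.prod_cons

theorem commute_siteOp_chainMonodromy {k : Fin N} {r : List (Fin N)} (hk : k ∉ r)
    (A : Matrix (Fin 2) (Fin 2) ℂ) (ν : Fin N → ℂ) (l : ℂ) (a b : Fin 2) :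
    Commute (siteOp k A) (chainMonodromy ν l r a b) := by
  refine scalar_commute_iff_forall_commute.1 (Commute.list_prod_right _ _ ?_) a b
  simp only [List.mem_map]
  rintro _ ⟨m, hm, rfl⟩
  refine scalar_commute_iff_forall_commute.2 fun c d => ?_
  rw [Lop_apply]
  exact commute_siteOp (ne_of_mem_of_not_mem hm hk).symm _ _

/-- The entry `(a, 1) ⊗ (b, 1)` of `T(l - 1) ⊗ T(l)` (over the sites in `r`) applied to `|⇑⟩`;
for the full chain, `fusedVec ν l _ 0 0 = B(l - 1) B(l) |⇑⟩`. -/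
def fusedVec (ν : Fin N → ℂ) (l : ℂ) (r : List (Fin N)) (a b : Fin 2) : Cfg N → ℂ :=
  (chainMonodromy ν (l - 1) r a 1 * chainMonodromy ν l r b 1) *ᵥ upVec N

theorem fusedVec_cons {k : Fin N} {r : List (Fin N)} (hk : k ∉ r) (ν : Fin N → ℂ) (l : ℂ)
    (a b : Fin 2) :
    fusedVec ν l (k :: r) a b = ∑ c, ∑ d,
      siteOp k (localL (l - ν k - 1) a c * localL (l - ν k) b d) *ᵥ fusedVec ν l r c d := by
  simp only [fusedVec, chainMonodromy_cons, mul_apply, Finset.sum_mul_sum, sum_mulVec]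
  refine Finset.sum_congr rfl fun c _ => Finset.sum_congr rfl fun d _ => ?_
  rw [mulVec_mulVec, Lop_apply, Lop_apply, sub_right_comm, ← siteOp_mul, mul_assoc, mul_assoc,
    ← mul_assoc (chainMonodromy ν (l - 1) r c 1),
    (commute_siteOp_chainMonodromy hk _ ν (l - 1) c 1).symm.eq, mul_assoc]

theorem fusedVec_symm {r : List (Fin N)} (hr : r.Nodup) (ν : Fin N → ℂ) (l : ℂ) (a b : Fin 2) :
    fusedVec ν l r a b = fusedVec ν l r b a := by
  induction r generalizing a b with
  | nil => fin_cases a <;> fin_cases b <;> simp [fusedVec, chainMonodromy]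
  | cons k r ih =>
    obtain ⟨hk, hr'⟩ := List.nodup_cons.1 hr
    rw [← sub_eq_zero, fusedVec_cons hk, fusedVec_cons hk, ← Finset.sum_sub_distrib]
    simp only [← Finset.sum_sub_distrib, ← sub_mulVec, ← siteOp_sub]
    refine sum_sum_mulVec_eq_zero_of_antisymm _ _ (fun c d => ?_) (ih hr')
    rw [← siteOp_add, sub_add_sub_comm, localL_mul_symm, sub_self, siteOp_zero]

theorem fusedVec_eq_zero {r : List (Fin N)} (hr : r.Nodup) {j : Fin N} (hj : j ∈ r)
    (ν : Fin N → ℂ) (a b : Fin 2) : fusedVec ν (ν j) r a b = 0 := by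
  induction r generalizing a b with
  | nil => simp at hj
  | cons k r ih =>
    obtain ⟨hk, hr'⟩ := List.nodup_cons.1 hr
    rw [fusedVec_cons hk]
    rcases List.mem_cons.1 hj with rfl | hj
    · rw [sub_self, zero_sub]
      refine sum_sum_mulVec_eq_zero_of_antisymm _ _ (fun c d => ?_) (fusedVec_symm hr' ν (ν j))
      rw [← siteOp_add, localL_neg_one_mul_antisymm, siteOp_zero]
    · simp [ih hr' hj]

theorem Bop_mul_Bop_mulVec_upVec (ν : Fin N → ℂ) (j : Fin N) :
    (Bop ν (ν j - 1) * Bop ν (ν j)) *ᵥ upVec N = 0 :=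
  fusedVec_eq_zero (List.nodup_reverse.2 (List.nodup_finRange N))
    (List.mem_reverse.2 (List.mem_finRange j)) ν 0 0

theorem Zfun_eq_zero_of_mulVec_upVec_eq_zero {M : ℕ} (ν lam : Fin (M + 2) → ℂ)
    (h : (Bop ν (lam 1) * Bop ν (lam 0)) *ᵥ upVec (M + 2) = 0) : Zfun (M + 2) ν lam = 0 := by
  have hcol : ∀ t, (Bop ν (lam 1) * Bop ν (lam 0)) t (upCfg (M + 2)) = 0 := fun t => by
    simpa [upVec, basisVec, mulVec_single] using congrFun h t
  rw [Zfun, List.finRange_succ, List.finRange_succ]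
  simp only [List.map_cons, Fin.succ_zero_eq_one, List.map_map, List.reverse_cons,
    List.append_assoc, List.cons_append, List.nil_append, List.map_append, List.map_reverse,
    List.map_nil, List.prod_append, List.prod_cons, List.prod_nil, mul_one]
  rw [mul_apply]
  exact Finset.sum_eq_zero fun t _ => by rw [hcol, mul_zero]

end SixVertex

open SixVertex in
/-- for `N ≥ 2` and pairwise distinct `ν`, the partition function vanishes
whenever its first two arguments are `ν_j` and `ν_j - 1`:
`Z_N(ν_j, ν_j - 1, λ_3, …, λ_N) = 0`. -/
theorem Zfun_vanishing (N : ℕ) (hN : 2 ≤ N) (ν : Fin N → ℂ)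
    (j : Fin N) (lam : Fin N → ℂ)
    (h1 : lam ⟨0, by omega⟩ = ν j) (h2 : lam ⟨1, by omega⟩ = ν j - 1) :
    Zfun N ν lam = 0 := by
  obtain ⟨M, rfl⟩ : ∃ M, N = M + 2 := ⟨N - 2, by omega⟩
  refine Zfun_eq_zero_of_mulVec_upVec_eq_zero ν lam ?_
  rw [← Fin.mk_one, ← Fin.mk_zero, h1, h2]
  exact Bop_mul_Bop_mulVec_upVec ν j
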